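/- For every c ≥ 3 with c ≡ 1 (mod 4) and every odd k ≥ 3, γ(P(ck,k)) ≤ (ck−1)/2 + (k+1)/2. -/

import Mathlib

open SimpleGraph

/-- The generalized Petersen graph P(n,k): outer vertices `Sum.inl i`,
inner vertices `Sum.inr i`, indices in `ZMod n`. -/
def petersen (n k : ℕ) : SimpleGraph (ZMod n ⊕ ZMod n) :=
  SimpleGraph.fromRel (fun a b =>
    match a, b with
    | Sum.inl i, Sum.inl j => j = i + 1
    | Sum.inl i, Sum.inr j => j = i
    | Sum.inr i, Sum.inr j => j = i + (k : ZMod n)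
    | _, _ => False)

/-- S is a dominating set: N[S] = V. -/
def IsDominating {V : Type*} (G : SimpleGraph V) (S : Set V) : Prop :=
  ∀ v, v ∈ S ∨ ∃ u ∈ S, G.Adj u v

/-- The domination number: minimum cardinality of a (finite) dominating set. -/
noncomputable def gamma {V : Type*} (G : SimpleGraph V) : ℕ :=
  sInf {m | ∃ S : Finset V, IsDominating G ↑S ∧ S.card = m}

/-!
Take every fourth outer vertex `v_{4j}` and the inner vertices `u_{4j+2}`; for odd `n` this
dominates all outer vertices and all even inner vertices. For odd `j`, the indices `j - k` and
`j + k` are even and differ by `2k ≡ 2 (mod 4)`, so one of them is `≡ 2 (mod 4)` and `u_j` is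
dominated along an inner edge, unless that neighbour wraps around the cycle, i.e. `j < k` or
`n - k ≤ j`. At most `(k + 1) / 2` such inner vertices are added to the set; when
`n ≡ k (mod 4)` the total is `(n - 1) / 2 + (k + 1) / 2`, and `ck ≡ k (mod 4)` for `c ≡ 1`.
-/

open Finset Sum

theorem gamma_le_card {V : Type*} {G : SimpleGraph V} {S : Finset V}
    (hS : IsDominating G ↑S) : gamma G ≤ S.card :=
  Nat.sInf_le ⟨S, hS, rfl⟩

theorem ZMod.natCast_ne_natCast_of_lt {n a b : ℕ} (ha : a < n) (hb : b < n) (hab : a ≠ b) :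
    (a : ZMod n) ≠ b := by
  rw [Ne, ZMod.natCast_eq_natCast_iff', Nat.mod_eq_of_lt ha, Nat.mod_eq_of_lt hb]
  exact hab

def arithProg (a d N : ℕ) : Finset ℕ :=
  (range N).image (a + d * ·)

theorem card_arithProg_le (a d N : ℕ) : (arithProg a d N).card ≤ N :=
  card_image_le.trans (card_range N).le

theorem mem_arithProg {a d N m : ℕ} (hd : 0 < d) :
    m ∈ arithProg a d N ↔ a ≤ m ∧ (m - a) % d = 0 ∧ m < a + d * N := by
  simp only [arithProg, mem_image, mem_range]
  constructor
  · rintro ⟨j, hj, rfl⟩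
    refine ⟨Nat.le_add_right a _, by simp, ?_⟩
    have := Nat.mul_lt_mul_of_pos_left hj hd
    omega
  · rintro ⟨ham, hdvd, hlt⟩
    have hdiv : d * ((m - a) / d) = m - a := Nat.mul_div_cancel' (Nat.dvd_of_mod_eq_zero hdvd)
    refine ⟨(m - a) / d, ?_, by omega⟩
    rw [Nat.div_lt_iff_lt_mul hd, mul_comm]
    omega

section Petersen

variable {n k : ℕ}

theorem petersen_adj_inl_inl {a b : ZMod n} :
    (petersen n k).Adj (inl a) (inl b) ↔ a ≠ b ∧ (b = a + 1 ∨ a = b + 1) := by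
  simp [petersen]

theorem petersen_adj_inl_inr {a b : ZMod n} : (petersen n k).Adj (inl a) (inr b) ↔ b = a := by
  simp [petersen]

theorem petersen_adj_inr_inr {a b : ZMod n} :
    (petersen n k).Adj (inr a) (inr b) ↔ a ≠ b ∧ (b = a + k ∨ a = b + k) := by
  simp [petersen]

theorem petersen_adj_natCast_succ {i : ℕ} (hi : i + 1 < n) :
    (petersen n k).Adj (inl (i : ZMod n)) (inl ((i + 1 : ℕ) : ZMod n)) :=
  petersen_adj_inl_inl.2
    ⟨ZMod.natCast_ne_natCast_of_lt (by omega) hi (by omega), Or.inl (Nat.cast_succ i)⟩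

theorem petersen_adj_natCast_add {i : ℕ} (hk : 0 < k) (hi : i + k < n) :
    (petersen n k).Adj (inr (i : ZMod n)) (inr ((i + k : ℕ) : ZMod n)) :=
  petersen_adj_inr_inr.2
    ⟨ZMod.natCast_ne_natCast_of_lt (by omega) hi (by omega), Or.inl (Nat.cast_add i k)⟩

theorem isDominating_petersen_of_forall_lt [NeZero n] (O I : Finset ℕ) (hk : 0 < k)
    (outer : ∀ i < n, i ∈ O ∨ i ∈ I ∨ (i + 1 < n ∧ i + 1 ∈ O) ∨ (0 < i ∧ i - 1 ∈ O))
    (inner : ∀ j < n, j ∈ I ∨ j ∈ O ∨ (j + k < n ∧ j + k ∈ I) ∨ (k ≤ j ∧ j - k ∈ I)) :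
    IsDominating (petersen n k)
      ↑(O.image (fun i : ℕ => inl (i : ZMod n)) ∪ I.image (fun j : ℕ => inr (j : ZMod n))) := by
  set S := O.image (fun i : ℕ => inl (i : ZMod n)) ∪ I.image (fun j : ℕ => inr (j : ZMod n))
  have memO : ∀ i ∈ O, inl (i : ZMod n) ∈ (S : Set (ZMod n ⊕ ZMod n)) := fun i hi =>
    mem_coe.2 (mem_union_left _ (mem_image_of_mem _ hi))
  have memI : ∀ j ∈ I, inr (j : ZMod n) ∈ (S : Set (ZMod n ⊕ ZMod n)) := fun j hj =>
    mem_coe.2 (mem_union_right _ (mem_image_of_mem _ hj))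
  have spoke (i : ℕ) : (petersen n k).Adj (inl (i : ZMod n)) (inr (i : ZMod n)) :=
    petersen_adj_inl_inr.2 rfl
  rintro (a | a) <;> obtain ⟨i, hi, rfl⟩ : ∃ i < n, (i : ZMod n) = a :=
    ⟨a.val, a.val_lt, a.natCast_zmod_val⟩
  · rcases outer i hi with h | h | ⟨hlt, h⟩ | ⟨hpos, h⟩
    · exact .inl (memO i h)
    · exact .inr ⟨_, memI i h, (spoke i).symm⟩
    · exact .inr ⟨_, memO _ h, (petersen_adj_natCast_succ hlt).symm⟩
    · have hadj := petersen_adj_natCast_succ (n := n) (k := k) (i := i - 1) (by omega)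
      rw [Nat.sub_add_cancel hpos] at hadj
      exact .inr ⟨_, memO _ h, hadj⟩
  · rcases inner i hi with h | h | ⟨hlt, h⟩ | ⟨hle, h⟩
    · exact .inl (memI i h)
    · exact .inr ⟨_, memO i h, spoke i⟩
    · exact .inr ⟨_, memI _ h, (petersen_adj_natCast_add hk hlt).symm⟩
    · have hadj := petersen_adj_natCast_add (n := n) (i := i - k) hk (by omega)
      rw [Nat.sub_add_cancel hle] at hadj
      exact .inr ⟨_, memI _ h, hadj⟩

def domOuterIdx (n : ℕ) : Finset ℕ :=
  arithProg 0 4 (n / 4 + 1)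

/-- The inner vertices `u_2, u_6, u_10, …`, together with the odd `j < k` and `j ≥ n - k` whose
inner neighbour `u_{j ∓ k}` of index `≡ 2 (mod 4)` would lie across the wrap-around of the cycle. -/
def domInnerIdx (n k : ℕ) : Finset ℕ :=
  arithProg 2 4 ((n + 1) / 4) ∪ arithProg ((k + 2) % 4) 4 ((k + 1) / 4) ∪
    arithProg (n - 4 * (k / 4)) 4 (k / 4)

theorem mem_domOuterIdx {m : ℕ} (hm : m % 4 = 0) (hmn : m < n) : m ∈ domOuterIdx n := by
  rw [domOuterIdx, mem_arithProg four_pos]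
  omega

theorem mem_domInnerIdx_of_mod_four_eq_two {m : ℕ} (hm : m % 4 = 2) (hmn : m < n) :
    m ∈ domInnerIdx n k := by
  simp only [domInnerIdx, mem_union, mem_arithProg four_pos]
  omega

theorem mem_domInnerIdx_of_lt {m : ℕ} (hk : k % 2 = 1) (hm : m % 4 = (k + 2) % 4) (hmk : m < k) :
    m ∈ domInnerIdx n k := by
  simp only [domInnerIdx, mem_union, mem_arithProg four_pos]
  omega

theorem mem_domInnerIdx_of_le {m : ℕ} (hkn : k ≤ n) (hm : (n - m) % 4 = 0) (hkm : n - k ≤ m)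
    (hmn : m < n) : m ∈ domInnerIdx n k := by
  simp only [domInnerIdx, mem_union, mem_arithProg four_pos]
  omega

theorem card_domOuterIdx_le : (domOuterIdx n).card ≤ n / 4 + 1 :=
  card_arithProg_le _ _ _

theorem card_domInnerIdx_le : (domInnerIdx n k).card ≤ (n + 1) / 4 + (k + 1) / 4 + k / 4 :=
  (card_union_le _ _).trans <| add_le_add ((card_union_le _ _).trans <|
    add_le_add (card_arithProg_le _ _ _) (card_arithProg_le _ _ _)) (card_arithProg_le _ _ _)

theorem isDominating_petersen_domIdx (hkn : k ≤ n) (hnk : n % 4 = k % 4) (hk : k % 2 = 1) :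
    IsDominating (petersen n k) ↑((domOuterIdx n).image (fun i : ℕ => inl (i : ZMod n)) ∪
      (domInnerIdx n k).image (fun j : ℕ => inr (j : ZMod n))) := by
  have : NeZero n := ⟨by omega⟩
  refine isDominating_petersen_of_forall_lt _ _ (by omega) (fun i hi => ?_) (fun j hj => ?_)
  · rcases (by omega : i % 4 = 0 ∨ i % 4 = 1 ∨ i % 4 = 2 ∨ i % 4 = 3) with h | h | h | h
    · exact .inl (mem_domOuterIdx h hi)
    · exact .inr (.inr (.inr ⟨by omega, mem_domOuterIdx (by omega) (by omega)⟩))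
    · exact .inr (.inl (mem_domInnerIdx_of_mod_four_eq_two h hi))
    · exact .inr (.inr (.inl ⟨by omega, mem_domOuterIdx (by omega) (by omega)⟩))
  rcases (by omega : j % 4 = 0 ∨ j % 4 = 2 ∨ (j + k) % 4 = 2 ∨ (j + k) % 4 = 0) with h | h | h | h
  · exact .inr (.inl (mem_domOuterIdx h hj))
  · exact .inl (mem_domInnerIdx_of_mod_four_eq_two h hj)
  · by_cases hjk : j + k < n
    · exact .inr (.inr (.inl ⟨hjk, mem_domInnerIdx_of_mod_four_eq_two h hjk⟩))
    · exact .inl (mem_domInnerIdx_of_le hkn (by omega) (by omega) hj)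
  · by_cases hkj : k ≤ j
    · exact .inr (.inr (.inr ⟨hkj, mem_domInnerIdx_of_mod_four_eq_two (by omega) (by omega)⟩))
    · exact .inl (mem_domInnerIdx_of_lt hk (by omega) (by omega))

theorem gamma_petersen_le_of_mod_four_eq (hkn : k ≤ n) (hnk : n % 4 = k % 4) (hk : k % 2 = 1) :
    gamma (petersen n k) ≤ (n - 1) / 2 + (k + 1) / 2 := by
  refine (gamma_le_card (isDominating_petersen_domIdx hkn hnk hk)).trans <|
    (card_union_le _ _).trans <| (add_le_add (card_image_le.trans card_domOuterIdx_le)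
      (card_image_le.trans card_domInnerIdx_le)).trans ?_
  omega

end Petersen

theorem petersen_upper_c1mod4_kodd_general (c k : ℕ) (hc4 : c % 4 = 1) (hkodd : k % 2 = 1) :
    gamma (petersen (c * k) k) ≤ (c * k - 1) / 2 + (k + 1) / 2 :=
  gamma_petersen_le_of_mod_four_eq (Nat.le_mul_of_pos_left k (by omega))
    (by rw [Nat.mul_mod, hc4, one_mul, Nat.mod_mod]) hkodd

theorem petersen_upper_c1mod4_kodd (c k : ℕ) (hc : 3 ≤ c) (hc4 : c % 4 = 1)
    (hk : 3 ≤ k) (hkodd : k % 2 = 1) :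
    gamma (petersen (c * k) k) ≤ (c * k - 1) / 2 + (k + 1) / 2 :=
  petersen_upper_c1mod4_kodd_general c k hc4 hkodd
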